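/- Let K be a field, and let M be a 5×5 skew-symmetric matrix over the polynomial ring K[e₀,e₁,e₂,e₃] whose last row is (-e₀,-e₁,-e₂,-e₃,0) and whose upper-left 4×4 block has entries z_{i,j} of degree 2. Let P₀,P₁,P₂,P₃ denote the 4×4 sub-Pfaffians of M obtained by deleting row and column i (for i = 0,1,2,3), and P₄ the Pfaffian of the upper-left 4×4 block. If a ∈ K⁴ \ {0} satisfies P₀(a) = P₁(a) = P₂(a) = P₃(a) = 0, then also P₄(a) = 0. -/
import Mathlib


open MvPolynomial

/-- **Proposition 5.2** (pDeg3impliesDeg4).  Consider the 5×5 skew-symmetric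
matrix over `K[e₀,…,e₃]` with upper-left 4×4 block entries `z_{i,j}` of degree
2 and last column `(e₀,e₁,e₂,e₃,0)ᵀ`.  If the four degree-3 sub-Pfaffians
vanish at a nonzero point `a ∈ K⁴`, then so does the degree-4 Pfaffian
`z₀₁z₂₃ - z₀₂z₁₃ + z₀₃z₁₂` of the upper-left block. -/
theorem pfaffian_deg4_vanishes (K : Type*) [Field K]
    (z01 z02 z03 z12 z13 z23 : MvPolynomial (Fin 4) K)
    (h01 : z01.IsHomogeneous 2) (h02 : z02.IsHomogeneous 2)
    (h03 : z03.IsHomogeneous 2) (h12 : z12.IsHomogeneous 2)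
    (h13 : z13.IsHomogeneous 2) (h23 : z23.IsHomogeneous 2)
    (a : Fin 4 → K) (ha : a ≠ 0)
    (hP0 : eval a (z12 * X 3 - z13 * X 2 + X 1 * z23) = 0)
    (hP1 : eval a (z02 * X 3 - z03 * X 2 + X 0 * z23) = 0)
    (hP2 : eval a (z01 * X 3 - z03 * X 1 + X 0 * z13) = 0)
    (hP3 : eval a (z01 * X 2 - z02 * X 1 + X 0 * z12) = 0) :
    eval a (z01 * z23 - z02 * z13 + z03 * z12) = 0 := by
  simp only [map_sub, map_add, map_mul, eval_X] at hP0 hP1 hP2 hP3 ⊢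
  obtain ⟨i, hi⟩ := Function.ne_iff.mp ha
  simp only [Pi.zero_apply] at hi
  fin_cases i
  · apply mul_left_cancel₀ (show a 0 ≠ 0 from hi)
    rw [mul_zero]
    linear_combination eval a z01 * hP1 - eval a z02 * hP2 + eval a z03 * hP3
  · apply mul_left_cancel₀ (show a 1 ≠ 0 from hi)
    rw [mul_zero]
    linear_combination eval a z01 * hP0 - eval a z12 * hP2 + eval a z13 * hP3
  · apply mul_left_cancel₀ (show a 2 ≠ 0 from hi)
    rw [mul_zero]
    linear_combination eval a z02 * hP0 - eval a z12 * hP1 + eval a z23 * hP3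
  · apply mul_left_cancel₀ (show a 3 ≠ 0 from hi)
    rw [mul_zero]
    linear_combination eval a z03 * hP0 - eval a z13 * hP1 + eval a z23 * hP2
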